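/- Let G be a locally compact topological group with left Haar measure μ_G, acting continuously on a compact Hausdorff space B, let ν be a quasi-invariant Borel probability measure on B with continuous Radon–Nikodym cocycle c : G × B → (0,∞), c(g,b) := (d((g⁻¹)_*ν)/dν)(b), satisfying the cocycle identity c(g₁g₂,b) = c(g₁,g₂b)·c(g₂,b), and set Ξ(g) := ∫_B c(g⁻¹,b)^{1/2} dν(b). Let Λ be a discrete subgroup of G. Then there exist a relatively compact neighborhood U of the identity with Λ ∩ U = {e} and a constant C such that for every finite subset A ⊆ Λ and every b ∈ B: Σ_{γ∈A} c(γ⁻¹,b)^{1/2}/Ξ(γ) ≤ C · ∫_{AU} c(g⁻¹,b)^{1/2}/Ξ(g) dμ_G(g), where AU := {γu : γ ∈ A, u ∈ U}. -/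

import Mathlib

/-!
Choose an open neighbourhood `U` of `1` with compact closure whose `Λ`-translates are pairwise
disjoint. The cocycle identity factors `c((γu)⁻¹, b)^{1/2}` as `c(u⁻¹, γ⁻¹b)^{1/2} c(γ⁻¹, b)^{1/2}`,
and for `u` in the compact set `closure U` the first factor lies in a fixed interval `[m, M]`
with `m > 0`. Integrating over `b`, also `Ξ(γu) ≤ M Ξ(γ)`, so on `γU` the integrand is at least
`m / M` times its value at `γ`. Summing the integrals over the disjoint translates `γU`, `γ ∈ A`,
gives the claim with `C = M / (m μ_G(U))`.
-/

open MeasureTheory Pointwise Topology Function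
open scoped ENNReal

section IntegralOverCompact

variable {X B : Type*} [TopologicalSpace X] [TopologicalSpace B] [CompactSpace B]
  [MeasurableSpace B] [BorelSpace B] (ν : Measure B) [IsFiniteMeasure ν]

theorem continuous_integral_of_continuous_uncurry {F : X → B → ℝ}
    (hF : Continuous (uncurry F)) : Continuous fun x => ∫ b, F x b ∂ν := by
  have hcurry : Continuous fun x => (ContinuousMap.curry ⟨_, hF⟩ x : C(B, ℝ)) :=
    (ContinuousMap.curry ⟨_, hF⟩).continuous
  have hL1 := continuous_integral.comp ((ContinuousMap.toLp 1 ν ℝ).continuous.comp hcurry)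
  refine hL1.congr fun x => integral_congr_ae ?_
  exact ContinuousMap.coeFn_toLp (p := 1) ν _

theorem integral_pos_of_continuous_of_pos [NeZero ν] {f : B → ℝ} (hf : Continuous f)
    (hpos : ∀ b, 0 < f b) : 0 < ∫ b, f b ∂ν := by
  have hint : Integrable f ν := hf.integrable_of_hasCompactSupport (.of_compactSpace f)
  rw [integral_pos_iff_support_of_nonneg (fun b => (hpos b).le) hint,
    Function.support_eq_univ fun b => (hpos b).ne']
  exact Measure.measure_univ_pos.2 (NeZero.ne ν)

end IntegralOverCompact

namespace Subgroup

variable {G : Type*} [Group G] (Λ : Subgroup G)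

theorem coe_inter_eq_one_of_pairwise_disjoint_smul {U : Set G} (hU : (1 : G) ∈ U)
    (h : Pairwise (Disjoint on fun γ : Λ => (γ : G) • U)) : (Λ : Set G) ∩ U = {1} := by
  refine Set.Subset.antisymm (fun x ⟨hxΛ, hxU⟩ => ?_) (by simp [Λ.one_mem, hU])
  by_contra hx
  have hne : (⟨x, hxΛ⟩ : Λ) ≠ 1 := fun h' => hx (congrArg Subtype.val h')
  exact Set.disjoint_left.1 (h hne) (Set.mem_smul_set.2 ⟨1, hU, mul_one x⟩) (by simpa using hxU)

theorem exists_mem_nhds_one_pairwise_disjoint_smul [TopologicalSpace G] [IsTopologicalGroup G]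
    [DiscreteTopology Λ] :
    ∃ V ∈ 𝓝 (1 : G), Pairwise (Disjoint on fun γ : Λ => (γ : G) • V) := by
  obtain ⟨W, hW, hWΛ⟩ : ∃ W : Set G, IsOpen W ∧ Subtype.val ⁻¹' W = ({1} : Set Λ) :=
    isOpen_induced_iff.mp (isOpen_discrete _)
  have hW1 : (1 : G) ∈ W := show (1 : Λ) ∈ Subtype.val ⁻¹' W by simp [hWΛ]
  obtain ⟨V, hV, -, hVinv, hVV⟩ := exists_closed_nhds_one_inv_eq_mul_subset (hW.mem_nhds hW1)
  refine ⟨V, hV, fun γ₁ γ₂ hne => Set.disjoint_left.2 ?_⟩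
  rintro _ ⟨v₁, hv₁, rfl⟩ ⟨v₂, hv₂, h : (γ₂ : G) * v₂ = γ₁ * v₁⟩
  have hγ : ((γ₂⁻¹ * γ₁ : Λ) : G) = v₂ * v₁⁻¹ := by
    rw [coe_mul, coe_inv, inv_mul_eq_iff_eq_mul, ← mul_assoc, h, mul_inv_cancel_right]
  have hmem : γ₂⁻¹ * γ₁ ∈ Subtype.val ⁻¹' W := by
    rw [Set.mem_preimage, hγ]
    exact hVV (Set.mul_mem_mul hv₂ (hVinv ▸ Set.inv_mem_inv.2 hv₁))
  rw [hWΛ, Set.mem_singleton_iff, inv_mul_eq_one] at hmem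
  exact hne hmem.symm

theorem exists_isOpen_isCompact_closure_pairwise_disjoint_smul [TopologicalSpace G]
    [IsTopologicalGroup G] [LocallyCompactSpace G] [DiscreteTopology Λ] :
    ∃ U : Set G, IsOpen U ∧ (1 : G) ∈ U ∧ IsCompact (_root_.closure U) ∧
      Pairwise (Disjoint on fun γ : Λ => (γ : G) • U) := by
  obtain ⟨W, hW, hWdisj⟩ := Λ.exists_mem_nhds_one_pairwise_disjoint_smul
  obtain ⟨K, hK, hKcpt, hKclosed⟩ := exists_mem_nhds_isCompact_isClosed (1 : G)
  have hUW : interior (W ∩ K) ⊆ W := interior_subset.trans Set.inter_subset_left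
  refine ⟨interior (W ∩ K), isOpen_interior,
    mem_interior_iff_mem_nhds.2 (Filter.inter_mem hW hK),
    hKcpt.of_isClosed_subset isClosed_closure
      (closure_minimal (interior_subset.trans Set.inter_subset_right) hKclosed),
    fun _ _ hne => (hWdisj hne).mono (Set.smul_set_mono hUW) (Set.smul_set_mono hUW)⟩

end Subgroup

theorem IsCompact.exists_pos_bounds_of_continuous_uncurry {X Y : Type*} [TopologicalSpace X]
    [TopologicalSpace Y] [CompactSpace Y] {K : Set X} (hK : IsCompact K) {f : X → Y → ℝ}
    (hf : Continuous (uncurry f)) (hpos : ∀ x y, 0 < f x y) :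
    ∃ m M, 0 < m ∧ ∀ x ∈ K, ∀ y, m ≤ f x y ∧ f x y ≤ M := by
  have hKY := hK.prod (isCompact_univ (X := Y))
  obtain ⟨m, hm, hmf⟩ := hKY.exists_forall_le' hf.continuousOn fun p _ => hpos p.1 p.2
  obtain ⟨M, hM⟩ := hKY.bddAbove_image hf.continuousOn
  exact ⟨m, M, hm, fun x hx y => ⟨hmf (x, y) ⟨hx, trivial⟩, hM ⟨(x, y), ⟨hx, trivial⟩, rfl⟩⟩⟩

theorem sqrt_cocycle_mul_inv {G B : Type*} [Group G] [MulAction G B] {c : G → B → ℝ}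
    (hc_nonneg : ∀ g b, 0 ≤ c g b)
    (hc_cocycle : ∀ g₁ g₂ : G, ∀ b : B, c (g₁ * g₂) b = c g₁ (g₂ • b) * c g₂ b)
    (g h : G) (b : B) :
    √(c (g * h)⁻¹ b) = √(c h⁻¹ (g⁻¹ • b)) * √(c g⁻¹ b) := by
  rw [mul_inv_rev, hc_cocycle, Real.sqrt_mul (hc_nonneg _ _)]

section HarishChandraXi

variable {G B : Type*} [Group G] [MeasurableSpace B]

noncomputable def harishChandraXi (c : G → B → ℝ) (ν : Measure B) (g : G) : ℝ :=
  ∫ b, √(c g⁻¹ b) ∂ν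

variable [TopologicalSpace G] [TopologicalSpace B] [CompactSpace B] [BorelSpace B]
  (ν : Measure B) [IsFiniteMeasure ν] {c : G → B → ℝ}

theorem continuous_harishChandraXi [ContinuousInv G]
    (hc_cont : Continuous fun p : G × B => c p.1 p.2) : Continuous (harishChandraXi c ν) :=
  continuous_integral_of_continuous_uncurry ν
    (hc_cont.comp (continuous_inv.prodMap continuous_id)).sqrt

theorem harishChandraXi_pos [NeZero ν] (hc_pos : ∀ g b, 0 < c g b)
    (hc_cont : Continuous fun p : G × B => c p.1 p.2) (g : G) : 0 < harishChandraXi c ν g :=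
  integral_pos_of_continuous_of_pos ν (hc_cont.comp (Continuous.prodMk_right g⁻¹)).sqrt
    fun _ => Real.sqrt_pos.2 (hc_pos _ _)

variable [MulAction G B]

theorem harishChandraXi_mul_le (hc_nonneg : ∀ g b, 0 ≤ c g b)
    (hc_cocycle : ∀ g₁ g₂ : G, ∀ b : B, c (g₁ * g₂) b = c g₁ (g₂ • b) * c g₂ b)
    (hc_cont : Continuous fun p : G × B => c p.1 p.2) {h : G} {M : ℝ}
    (hM : ∀ b, √(c h⁻¹ b) ≤ M) (g : G) :
    harishChandraXi c ν (g * h) ≤ M * harishChandraXi c ν g := by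
  have hint : Integrable (fun b => √(c g⁻¹ b)) ν :=
    (hc_cont.comp (Continuous.prodMk_right g⁻¹)).sqrt.integrable_of_hasCompactSupport
      (.of_compactSpace _)
  rw [harishChandraXi, harishChandraXi, ← integral_const_mul]
  refine integral_mono_of_nonneg (.of_forall fun _ => Real.sqrt_nonneg _) (hint.const_mul M)
    (.of_forall fun b => ?_)
  change √(c (g * h)⁻¹ b) ≤ M * √(c g⁻¹ b)
  rw [sqrt_cocycle_mul_inv hc_nonneg hc_cocycle]
  exact mul_le_mul_of_nonneg_right (hM _) (Real.sqrt_nonneg _)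

theorem div_mul_sqrt_div_harishChandraXi_le [NeZero ν] (hc_pos : ∀ g b, 0 < c g b)
    (hc_cocycle : ∀ g₁ g₂ : G, ∀ b : B, c (g₁ * g₂) b = c g₁ (g₂ • b) * c g₂ b)
    (hc_cont : Continuous fun p : G × B => c p.1 p.2) {h : G} {m M : ℝ}
    (hbounds : ∀ b, m ≤ √(c h⁻¹ b) ∧ √(c h⁻¹ b) ≤ M) (g : G) (b : B) :
    m / M * (√(c g⁻¹ b) / harishChandraXi c ν g) ≤
      √(c (g * h)⁻¹ b) / harishChandraXi c ν (g * h) := by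
  have hc_nonneg g b : 0 ≤ c g b := (hc_pos g b).le
  rw [div_mul_div_comm, sqrt_cocycle_mul_inv hc_nonneg hc_cocycle]
  exact div_le_div₀ (by positivity)
    (mul_le_mul_of_nonneg_right (hbounds _).1 (Real.sqrt_nonneg _))
    (harishChandraXi_pos ν hc_pos hc_cont _)
    (harishChandraXi_mul_le ν hc_nonneg hc_cocycle hc_cont (fun b => (hbounds b).2) g)

end HarishChandraXi

theorem sum_le_inv_mul_setIntegral_image2_mul {G ι : Type*} [Group G] [MeasurableSpace G]
    [MeasurableMul G] (μ : Measure G) [μ.IsMulLeftInvariant] {v : ι → G} {U : Set G}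
    (hU : MeasurableSet U) (hμU₀ : μ U ≠ 0) (hμU : μ U ≠ ∞)
    (hdisj : Pairwise (Disjoint on fun i => v i • U)) {f : G → ℝ}
    (hf : ∀ i, IntegrableOn f (v i • U) μ) {a : ℝ} (ha : 0 < a)
    (hle : ∀ i, ∀ u ∈ U, a * f (v i) ≤ f (v i * u)) (A : Finset ι) :
    ∑ i ∈ A, f (v i) ≤
      (a * μ.real U)⁻¹ * ∫ g in Set.image2 (fun i u => v i * u) (A : Set ι) U, f g ∂μ := by
  have hUpos : 0 < μ.real U := ENNReal.toReal_pos hμU₀ hμU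
  have hterm (i : ι) : f (v i) ≤ (a * μ.real U)⁻¹ * ∫ g in v i • U, f g ∂μ := by
    have hlow : ∀ g ∈ v i • U, a * f (v i) ≤ f g := by
      rintro _ ⟨u, hu, rfl⟩
      exact hle i u hu
    have := setIntegral_ge_of_const_le_real (hU.const_smul (v i)) (by rwa [measure_smul]) hlow
      (hf i)
    rw [measureReal_def, measure_smul, ← measureReal_def] at this
    rw [le_inv_mul_iff₀ (by positivity)]
    linarith
  have hunion : Set.image2 (fun i u => v i * u) (A : Set ι) U = ⋃ i ∈ A, v i • U := by
    simp only [← Set.iUnion_image_left, ← Set.image_smul, smul_eq_mul, Finset.mem_coe]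
  calc ∑ i ∈ A, f (v i) ≤ ∑ i ∈ A, (a * μ.real U)⁻¹ * ∫ g in v i • U, f g ∂μ :=
        Finset.sum_le_sum fun i _ => hterm i
    _ = _ := by
      rw [← Finset.mul_sum, hunion, integral_biUnion_finset A
        (fun i _ => hU.const_smul (v i)) (fun _ _ _ _ hne => hdisj hne) (fun i _ => hf i)]

theorem statement7
    {G : Type*} [Group G] [TopologicalSpace G] [IsTopologicalGroup G]
    [LocallyCompactSpace G] [MeasurableSpace G] [BorelSpace G]
    (μG : Measure G) [μG.IsHaarMeasure]
    {B : Type*} [TopologicalSpace B] [CompactSpace B]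
    [MeasurableSpace B] [BorelSpace B]
    (ν : Measure B) [IsProbabilityMeasure ν]
    [MulAction G B]
    (c : G → B → ℝ) (hc_pos : ∀ g b, 0 < c g b)
    (hc_cont : Continuous fun p : G × B => c p.1 p.2)
    (hc_cocycle : ∀ g₁ g₂ : G, ∀ b : B, c (g₁ * g₂) b = c g₁ (g₂ • b) * c g₂ b)
    (Ξ : G → ℝ) (hΞ : ∀ g : G, Ξ g = ∫ b, Real.sqrt (c g⁻¹ b) ∂ν)
    (Λ : Subgroup G) (hdisc : DiscreteTopology Λ) :
    ∃ U : Set G, U ∈ nhds (1 : G) ∧ IsCompact (closure U) ∧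
      (Λ : Set G) ∩ U = {1} ∧
      ∃ C : ℝ, ∀ (A : Finset Λ) (b : B),
        ∑ γ ∈ A, Real.sqrt (c ((γ : G))⁻¹ b) / Ξ (γ : G) ≤
          C * ∫ g in Set.image2 (fun (γ : Λ) (u : G) => (γ : G) * u) (A : Set Λ) U,
                Real.sqrt (c g⁻¹ b) / Ξ g ∂μG := by
  obtain rfl : Ξ = harishChandraXi c ν := funext hΞ
  obtain ⟨U, hUopen, hU1, hUcpt, hUdisj⟩ :=
    Λ.exists_isOpen_isCompact_closure_pairwise_disjoint_smul
  have hsqrt_cont : Continuous fun p : G × B => √(c p.1⁻¹ p.2) :=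
    (hc_cont.comp (continuous_inv.prodMap continuous_id)).sqrt
  obtain ⟨m, M, hm, hmM⟩ := hUcpt.exists_pos_bounds_of_continuous_uncurry
    (f := fun u b => √(c u⁻¹ b)) hsqrt_cont fun _ _ => Real.sqrt_pos.2 (hc_pos _ _)
  refine ⟨U, hUopen.mem_nhds hU1, hUcpt,
    Λ.coe_inter_eq_one_of_pairwise_disjoint_smul hU1 hUdisj, (m / M * μG.real U)⁻¹,
    fun A b => ?_⟩
  obtain ⟨hm_le, h_leM⟩ := hmM 1 (subset_closure hU1) b
  have hM : 0 < M := hm.trans_le (hm_le.trans h_leM)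
  have hf : Continuous fun g => √(c g⁻¹ b) / harishChandraXi c ν g :=
    (hsqrt_cont.comp (Continuous.prodMk_left b)).div (continuous_harishChandraXi ν hc_cont)
      fun g => (harishChandraXi_pos ν hc_pos hc_cont g).ne'
  have hμU : μG U ≠ ∞ := ((measure_mono subset_closure).trans_lt hUcpt.measure_lt_top).ne
  refine sum_le_inv_mul_setIntegral_image2_mul μG hUopen.measurableSet
    (hUopen.measure_ne_zero μG ⟨1, hU1⟩) hμU hUdisj
    (f := fun g => √(c g⁻¹ b) / harishChandraXi c ν g) (fun γ => ?_) (div_pos hm hM)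
    (fun γ u hu => div_mul_sqrt_div_harishChandraXi_le ν hc_pos hc_cocycle hc_cont
      (hmM u (subset_closure hu)) γ b) A
  exact hf.continuousOn.integrableOn_of_subset_isCompact (hUcpt.smul (γ : G))
    (hUopen.measurableSet.const_smul _) (Set.smul_set_mono subset_closure)
    (by rwa [measure_smul])
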